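/- arXiv:1301.5206 — 3 statements merged into one kernel-verified Lean document; each statement's English description precedes it below -/
import Mathlib

section
/- Let (A, B) be a complete cotorsion pair in an abelian category C. Then every morphism h : X → Y in C factors as h = g ∘ f, where f is a monomorphism whose cokernel belongs to A and g is an epimorphism whose kernel belongs to B. -/
open CategoryTheory CategoryTheory.Limits

universe v u

variable {C : Type u} [Category.{v} C] [Abelian C]

/-- `Ext¹(A, B) = 0`, phrased as: every short exact sequence `0 → B → E → A → 0`
splits. -/
def Ext1Zero (A B : C) : Prop :=
  ∀ (E : C) (i : B ⟶ E) (p : E ⟶ A) (w : i ≫ p = 0),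
    (ShortComplex.mk i p w).ShortExact → ∃ s : A ⟶ E, s ≫ p = 𝟙 A

/-- The right `Ext¹`-orthogonal class `S^⊥` of a class of objects `S`. -/
def rightPerp (S : Set C) : Set C := {B | ∀ A ∈ S, Ext1Zero A B}

/-- The left `Ext¹`-orthogonal class `⊥S` of a class of objects `S`. -/
def leftPerp (S : Set C) : Set C := {A | ∀ B ∈ S, Ext1Zero A B}

/-- `(𝓐, 𝓑)` is a cotorsion pair: `𝓐 = ⊥𝓑` and `𝓑 = 𝓐^⊥`. -/
structure IsCotorsionPair (𝓐 𝓑 : Set C) : Prop where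
  left_eq : 𝓐 = leftPerp 𝓑
  right_eq : 𝓑 = rightPerp 𝓐

/-- `(𝓐, 𝓑)` is a complete cotorsion pair: a cotorsion pair admitting approximation
sequences `0 → X → B_X → A_X → 0` and `0 → B^X → A^X → X → 0` for every object `X`. -/
structure IsCompleteCotorsionPair (𝓐 𝓑 : Set C) extends IsCotorsionPair 𝓐 𝓑 : Prop where
  approx₁ : ∀ X : C, ∃ (B A : C) (i : X ⟶ B) (p : B ⟶ A) (w : i ≫ p = 0),
    (ShortComplex.mk i p w).ShortExact ∧ B ∈ 𝓑 ∧ A ∈ 𝓐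
  approx₂ : ∀ X : C, ∃ (B A : C) (i : B ⟶ A) (p : A ⟶ X) (w : i ≫ p = 0),
    (ShortComplex.mk i p w).ShortExact ∧ B ∈ 𝓑 ∧ A ∈ 𝓐


/-
Choose a special `𝓐`-precover `q : A ⟶ Y`. Then `h` is the split mono `X ⟶ X ⊞ A`, whose
cokernel is `A`, followed by the epimorphism `(h, q) : X ⊞ A ⟶ Y`. An epimorphism `g₀ : W ⟶ Y`
with kernel `K` factors through the pushout of `K ⟶ W` along a special `𝓑`-preenvelope
`K ⟶ B ⟶ A'`: the first factor has cokernel `A'` and the second has kernel `B`. The cokernel of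
the composite mono `X ⟶ X ⊞ A ⟶ Z` is an extension of `A'` by `A`, and `⊥𝓑` is closed under
extensions.
-/

lemma shortExact_pushout {K M Q N P : C} {a : K ⟶ M} {c : M ⟶ Q} {w : a ≫ c = 0}
    (hS : (ShortComplex.mk a c w).ShortExact) {b : K ⟶ N} {m : M ⟶ P} {n : N ⟶ P}
    (sq : IsPushout a b m n) :
    (ShortComplex.mk n (sq.desc c 0 (by simp [w])) (sq.inr_desc _ _ _)).ShortExact := by
  have hmono := hS.mono_f
  have := hS.epi_g
  have : Mono n := (MorphismProperty.monomorphisms C).of_isPushout sq.flip hmono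
  refine .mk' ?_ this (epi_of_epi_fac (sq.inl_desc c 0 _))
  rw [ShortComplex.exact_iff_exact_up_to_refinements]
  intro T x (hx : x ≫ sq.desc c 0 _ = 0)
  obtain ⟨T₁, π₁, _, x₂, x₃, hx₂₃⟩ := sq.hom_eq_add_up_to_refinements x
  have hx₂ : x₂ ≫ c = 0 := by
    have := π₁ ≫= hx
    rw [← Category.assoc, hx₂₃] at this
    simpa using this
  obtain ⟨T₂, π₂, _, y, hy⟩ := hS.exact.exact_up_to_refinements x₂ hx₂
  refine ⟨T₂, π₂ ≫ π₁, inferInstance, y ≫ b + π₂ ≫ x₃, ?_⟩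
  dsimp at hy ⊢
  simp [hx₂₃, reassoc_of% hy, sq.w]

lemma shortExact_kernel_comp {X Y Z : C} (f : X ⟶ Y) (g : Y ⟶ Z) [Epi f] :
    (ShortComplex.mk (kernel.map f (f ≫ g) (𝟙 _) g (by simp))
      (kernel.map (f ≫ g) g f (𝟙 _) (by simp)) (by ext; simp)).ShortExact := by
  have hE := kernelCokernelCompSequence_exact f g
  refine .mk' (hE.exact 0) ?_ ((hE.exact 1).epi_f ?_)
  · have : Mono ((kernelCokernelCompSequence f g).map' 0 1) := inferInstance
    exact this
  · exact (isZero_cokernel_of_epi f).eq_of_tgt _ _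

lemma shortExact_cokernel_comp {X Y Z : C} (f : X ⟶ Y) (g : Y ⟶ Z) [Mono g] :
    (ShortComplex.mk (cokernel.map f (f ≫ g) (𝟙 _) g (by simp))
      (cokernel.map (f ≫ g) g f (𝟙 _) (by simp)) (by ext; simp)).ShortExact := by
  have hE := kernelCokernelCompSequence_exact f g
  refine .mk' (hE.exact 3) ((hE.exact 2).mono_g ?_) ?_
  · exact (isZero_kernel_of_mono g).eq_of_src _ _
  · have : Epi ((kernelCokernelCompSequence f g).map' 4 5) := inferInstance
    exact this

namespace Ext1Zero

variable {A A' B B' : C}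

lemma of_iso_left (e : A' ≅ A) (h : Ext1Zero A B) : Ext1Zero A' B := by
  intro E i p w hE
  obtain ⟨s, hs⟩ := h E i (p ≫ e.hom) (by simp [reassoc_of% w])
    (ShortComplex.shortExact_of_iso (S₁ := ShortComplex.mk i p w)
      (ShortComplex.isoMk (Iso.refl _) (Iso.refl _) e (by simp) (by simp)) hE)
  refine ⟨e.hom ≫ s, ?_⟩
  rw [← cancel_mono e.hom]
  simpa using e.hom ≫= hs

lemma of_iso_right (e : B' ≅ B) (h : Ext1Zero A B) : Ext1Zero A B' := by
  intro E i p w hE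
  exact h E (e.inv ≫ i) p (by simp [w])
    (ShortComplex.shortExact_of_iso (S₁ := ShortComplex.mk i p w)
      (ShortComplex.isoMk e (Iso.refl _) (Iso.refl _) (by simp) (by simp)) hE)

lemma of_retraction (h : ∀ (E : C) (i : B ⟶ E) (p : E ⟶ A) (w : i ≫ p = 0),
    (ShortComplex.mk i p w).ShortExact → ∃ r : E ⟶ B, i ≫ r = 𝟙 B) : Ext1Zero A B := by
  intro E i p w hE
  obtain ⟨r, hr⟩ := h E i p w hE
  let σ := ShortComplex.Splitting.ofExactOfRetraction _ hE.exact r hr hE.epi_g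
  exact ⟨σ.s, σ.s_g⟩

lemma exists_extension (h : Ext1Zero A B) {K M : C} {a : K ⟶ M} {c : M ⟶ A} {w : a ≫ c = 0}
    (hS : (ShortComplex.mk a c w).ShortExact) (φ : K ⟶ B) : ∃ ψ : M ⟶ B, a ≫ ψ = φ := by
  have hP := shortExact_pushout hS (IsPushout.of_hasPushout a φ)
  obtain ⟨s, hs⟩ := h _ _ _ _ hP
  let σ := ShortComplex.Splitting.ofExactOfSection _ hP.exact s hs hP.mono_f
  refine ⟨pushout.inl a φ ≫ σ.r, ?_⟩
  rw [pushout.condition_assoc]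
  exact (φ ≫= σ.f_r).trans (Category.comp_id φ)

/-- A retraction of `i : B ⟶ E` is obtained by extending `kernel p ≅ B` first to
`kernel (p ≫ S.g)`, the preimage of `S.X₁`, and then to `E`. -/
lemma of_shortExact {S : ShortComplex C} (hS : S.ShortExact) (h₁ : Ext1Zero S.X₁ B)
    (h₃ : Ext1Zero S.X₃ B) : Ext1Zero S.X₂ B := by
  have := hS.epi_g
  refine of_retraction fun E i p w hE => ?_
  have := hE.epi_g
  let eB : B ≅ kernel p := hE.fIsKernel.conePointUniqueUpToIso (limit.isLimit _)
  let e₁ : kernel S.g ≅ S.X₁ := (kernelIsKernel S.g).conePointUniqueUpToIso hS.fIsKernel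
  obtain ⟨ψ₁, hψ₁⟩ := (h₁.of_iso_left e₁).exists_extension (shortExact_kernel_comp p S.g) eB.inv
  obtain ⟨ψ, hψ⟩ := h₃.exists_extension (.mk' (ShortComplex.kernelSequence_exact (p ≫ S.g))
    inferInstance (epi_comp p S.g)) ψ₁
  refine ⟨ψ, ?_⟩
  have hi : i = eB.hom ≫ kernel.map p (p ≫ S.g) (𝟙 _) S.g (by simp) ≫ kernel.ι (p ≫ S.g) := by
    simp [eB]
  rw [hi, Category.assoc, Category.assoc, hψ, hψ₁, Iso.hom_inv_id]

end Ext1Zero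

namespace IsCotorsionPair

variable {𝓐 𝓑 : Set C}

lemma mem_left_of_iso (hp : IsCotorsionPair 𝓐 𝓑) {A A' : C} (e : A' ≅ A) (hA : A ∈ 𝓐) :
    A' ∈ 𝓐 := by
  rw [hp.left_eq] at hA ⊢
  exact fun B hB => (hA B hB).of_iso_left e

lemma mem_right_of_iso (hp : IsCotorsionPair 𝓐 𝓑) {B B' : C} (e : B' ≅ B) (hB : B ∈ 𝓑) :
    B' ∈ 𝓑 := by
  rw [hp.right_eq] at hB ⊢
  exact fun A hA => (hB A hA).of_iso_right e

lemma cokernel_comp_mem_left (hp : IsCotorsionPair 𝓐 𝓑) {X Y Z : C} (f : X ⟶ Y) (g : Y ⟶ Z)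
    [Mono g] (hf : cokernel f ∈ 𝓐) (hg : cokernel g ∈ 𝓐) : cokernel (f ≫ g) ∈ 𝓐 := by
  rw [hp.left_eq] at hf hg ⊢
  exact fun B hB => Ext1Zero.of_shortExact (shortExact_cokernel_comp f g) (hf B hB) (hg B hB)

end IsCotorsionPair

lemma IsCompleteCotorsionPair.exists_factorization_of_epi {𝓐 𝓑 : Set C}
    (hp : IsCompleteCotorsionPair 𝓐 𝓑) {W Y : C} (g₀ : W ⟶ Y) [Epi g₀] :
    ∃ (Z : C) (f : W ⟶ Z) (g : Z ⟶ Y),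
      f ≫ g = g₀ ∧ Mono f ∧ cokernel f ∈ 𝓐 ∧ Epi g ∧ kernel g ∈ 𝓑 := by
  obtain ⟨B, A, j, _, _, hj, hB, hA⟩ := hp.approx₁ (kernel g₀)
  have := hj.mono_f
  have sq := IsPushout.of_hasPushout (kernel.ι g₀) j
  have hZ := shortExact_pushout
    (.mk' (ShortComplex.kernelSequence_exact g₀) inferInstance inferInstance) sq
  refine ⟨_, pushout.inl _ _, sq.desc g₀ 0 (by simp), sq.inl_desc _ _ _, inferInstance, ?_,
    epi_of_epi_fac (sq.inl_desc _ _ _), ?_⟩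
  · have := isIso_cokernel_map_of_isPushout sq.flip
    exact hp.mem_left_of_iso ((asIso (cokernel.map _ _ _ _ sq.flip.w)).symm ≪≫
      (cokernelIsCokernel j).coconePointUniqueUpToIso hj.gIsCokernel) hA
  · exact hp.mem_right_of_iso ((kernelIsKernel _).conePointUniqueUpToIso hZ.fIsKernel) hB

/-- Let `(𝓐, 𝓑)` be a complete cotorsion pair in an abelian category `C`.  Then every
morphism `h : X ⟶ Y` in `C` factors as `h = g ∘ f`, where `f` is a monomorphism whose
cokernel belongs to `𝓐` and `g` is an epimorphism whose kernel belongs to `𝓑`. -/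
theorem stmt_4 (𝓐 𝓑 : Set C) (hpair : IsCompleteCotorsionPair 𝓐 𝓑)
    {X Y : C} (h : X ⟶ Y) :
    ∃ (Z : C) (f : X ⟶ Z) (g : Z ⟶ Y),
      f ≫ g = h ∧ Mono f ∧ cokernel f ∈ 𝓐 ∧ Epi g ∧ kernel g ∈ 𝓑 := by
  obtain ⟨_, A, _, q, _, hq, -, hA⟩ := hpair.approx₂ Y
  have := hq.epi_g
  have : Epi (biprod.desc h q) := epi_of_epi_fac (biprod.inr_desc h q)
  obtain ⟨Z, f, g, hfg, _, hf, hg, hkg⟩ := hpair.exists_factorization_of_epi (biprod.desc h q)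
  have hinl : cokernel (biprod.inl : X ⟶ X ⊞ A) ∈ 𝓐 := hpair.mem_left_of_iso
    ((cokernelIsCokernel _).coconePointUniqueUpToIso (biprod.isCokernelInlCokernelFork X A)) hA
  exact ⟨Z, biprod.inl ≫ f, g, by simp [hfg], inferInstance,
    hpair.cokernel_comp_mem_left _ _ hinl hf, hg, hkg⟩
end

section
/- Let C be an abelian category, f : A → B a monomorphism and g : X → Y an epimorphism in C such that Ext¹_C(coker f, ker g) = 0. Then f has the left lifting property with respect to g: for every pair of morphisms u : A → X and v : B → Y with g ∘ u = v ∘ f there exists h : B → X with h ∘ f = u and g ∘ h = v. -/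
/-!
In the pullback `P = X ×_Y B` the projection `q : P → B` is an epimorphism with kernel `ker g`,
and a lift `h` is the same as a section of `q` restricting to `(u, f) : A → P` along `f`.
The kernel–cokernel sequence of the composite `A → P → B` makes
`0 → ker g → coker (u, f) → coker f → 0` exact. A splitting of it gives a retraction of
`ker g → P` vanishing on `A`, and the complementary section of `q` is the required one.
-/

open CategoryTheory CategoryTheory.Limits

universe v u

variable {C : Type u} [Category.{v} C] [Abelian C]

theorem Ext1Zero.of_iso_right_s5 {A B B' : C} (h : Ext1Zero A B) (e : B' ≅ B) : Ext1Zero A B' := by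
  intro E i p w hS
  exact h E (e.inv ≫ i) p (by simp [w]) (ShortComplex.shortExact_of_iso
    (ShortComplex.isoMk (S₁ := .mk i p w) (S₂ := .mk (e.inv ≫ i) p (by simp [w]))
      e (Iso.refl _) (Iso.refl _) (by simp) (by simp)) hS)

namespace CategoryTheory.kernelCokernelCompSequence

theorem shortExact_of_mono_comp_of_epi {A P B : C} (a : A ⟶ P) (q : P ⟶ B) [Mono (a ≫ q)]
    [Epi q] :
    (ShortComplex.mk (δ a q) (cokernel.map a (a ≫ q) (𝟙 _) q (by simp))
      ((kernelCokernelCompSequence_exact a q).toIsComplex.zero 2)).ShortExact := by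
  have hexact := kernelCokernelCompSequence_exact a q
  refine { exact := hexact.exact 2, mono_f := ?_, epi_g := ?_ }
  · exact (hexact.exact 1).mono_g ((isZero_kernel_of_mono _).eq_of_src _ _)
  · exact (hexact.exact 3).epi_f ((isZero_cokernel_of_epi _).eq_of_tgt _ _)

end CategoryTheory.kernelCokernelCompSequence

open kernelCokernelCompSequence in
theorem exists_section_of_ext1Zero {A P B : C} (q : P ⟶ B) [Epi q] (f : A ⟶ B) [Mono f]
    (a : A ⟶ P) (ha : a ≫ q = f) (hext : Ext1Zero (cokernel f) (kernel q)) :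
    ∃ t : B ⟶ P, t ≫ q = 𝟙 B ∧ f ≫ t = a := by
  subst ha
  have hS := shortExact_of_mono_comp_of_epi a q
  obtain ⟨s, hs⟩ := hext _ _ _ _ hS
  let σ := ShortComplex.Splitting.ofExactOfSection _ hS.exact s hs hS.mono_f
  -- `δ a q = -(kernel.ι q ≫ cokernel.π a)`, so `ρ` is a retraction of `kernel.ι q`
  -- which vanishes on `a`.
  let ρ : P ⟶ kernel q := -(cokernel.π a ≫ σ.r)
  have hρ : kernel.ι q ≫ ρ = 𝟙 _ := by
    simpa [ρ, δ_fac] using σ.f_r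
  let τ := ShortComplex.Splitting.ofExactOfRetraction _ (ShortComplex.exact_kernel q) ρ hρ
    (by dsimp; infer_instance)
  have hτr : τ.r = ρ := rfl
  refine ⟨τ.s, τ.s_g, ?_⟩
  simpa [hτr, ρ] using a ≫= τ.id

noncomputable def kernelPullbackSndIso {D : Type*} [Category D] [HasZeroMorphisms D] {X Y B : D}
    (g : X ⟶ Y) (v : B ⟶ Y) [HasPullback g v] [HasKernel g] [HasKernel (pullback.snd g v)] :
    kernel (pullback.snd g v) ≅ kernel g :=
  have := isIso_kernel_map_of_isPullback (IsPullback.of_hasPullback g v).flip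
  asIso (kernel.map _ _ _ _ (IsPullback.of_hasPullback g v).flip.w)

/-- Let `C` be an abelian category, `f : A → B` a monomorphism and `g : X → Y` an
epimorphism in `C` such that `Ext¹_C(coker f, ker g) = 0`.  Then `f` has the left
lifting property with respect to `g`: for every `u : A → X` and `v : B → Y` with
`g ∘ u = v ∘ f` there exists `h : B → X` with `h ∘ f = u` and `g ∘ h = v`. -/
theorem stmt_5 {A B X Y : C} (f : A ⟶ B) (g : X ⟶ Y) (hf : Mono f) (hg : Epi g)
    (hext : Ext1Zero (cokernel f) (kernel g)) :
    ∀ (u : A ⟶ X) (v : B ⟶ Y), u ≫ g = f ≫ v →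
      ∃ h : B ⟶ X, f ≫ h = u ∧ h ≫ g = v := by
  intro u v huv
  obtain ⟨t, ht, hft⟩ := exists_section_of_ext1Zero (pullback.snd g v) f (pullback.lift u f huv)
    (pullback.lift_snd _ _ _) (hext.of_iso_right_s5 (kernelPullbackSndIso g v))
  refine ⟨t ≫ pullback.fst g v, ?_, ?_⟩
  · rw [reassoc_of% hft, pullback.lift_fst]
  · rw [Category.assoc, pullback.condition, reassoc_of% ht]
end

section
/- Let C be an abelian category and A a class of objects of C. If g : X → Y is an epimorphism such that every monomorphism f whose cokernel is isomorphic to an object of A has the left lifting property with respect to g, then Ext¹_C(A, ker g) = 0 for every A ∈ A. Dually, if B is a class of objects and f is a monomorphism which has the left lifting property with respect to every epimorphism whose kernel is isomorphic to an object of B, then Ext¹_C(coker f, B) = 0 for every B ∈ B. -/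
open CategoryTheory CategoryTheory.Limits

universe v u

variable {C : Type u} [Category.{v} C] [Abelian C]

/-- `f` has the left lifting property with respect to `g`. -/
def LLP {A B X Y : C} (f : A ⟶ B) (g : X ⟶ Y) : Prop :=
  ∀ (u : A ⟶ X) (v : B ⟶ Y), u ≫ g = f ≫ v → ∃ h : B ⟶ X, f ≫ h = u ∧ h ≫ g = v

/-
A short exact sequence `0 → B → E → A → 0` splits as soon as its first map has a retraction
or its last map has a section. The lifting property supplies one or the other: lifting
`kernel.ι g` against `0` along `i : kernel g ⟶ E` gives a map `E ⟶ X` that lands in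
`kernel g` and retracts `i`; dually, lifting `0` against `cokernel.π f` along `f` gives a map
`W ⟶ E` that factors through `cokernel f` and is a section of `p`.
-/

theorem ext1Zero_of_forall_retraction {A B : C}
    (h : ∀ (E : C) (i : B ⟶ E) (p : E ⟶ A) (w : i ≫ p = 0),
      (ShortComplex.mk i p w).ShortExact → ∃ r : E ⟶ B, i ≫ r = 𝟙 B) :
    Ext1Zero A B := by
  intro E i p w hS
  obtain ⟨r, hr⟩ := h E i p w hS
  have := hS.epi_g
  exact ⟨_, (ShortComplex.Splitting.ofExactOfRetraction _ hS.exact r hr this).s_g⟩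

theorem exists_retraction_of_llp_kernel {E X Y : C} (g : X ⟶ Y) (i : kernel g ⟶ E)
    (hi : LLP i g) : ∃ r : E ⟶ kernel g, i ≫ r = 𝟙 (kernel g) := by
  obtain ⟨h, hih, hhg⟩ := hi (kernel.ι g) 0 (by simp)
  refine ⟨kernel.lift g h hhg, ?_⟩
  rw [← cancel_mono (kernel.ι g)]
  simp [hih]

theorem exists_section_of_llp_cokernel {Z W E : C} (f : Z ⟶ W) (p : E ⟶ cokernel f)
    (hf : LLP f p) : ∃ s : cokernel f ⟶ E, s ≫ p = 𝟙 (cokernel f) := by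
  obtain ⟨h, hfh, hhp⟩ := hf 0 (cokernel.π f) (by simp)
  refine ⟨cokernel.desc f h hfh, ?_⟩
  rw [← cancel_epi (cokernel.π f)]
  simp [hhp]

/-- Let `C` be an abelian category.  (1) If `𝓐` is a class of objects and `g : X → Y`
is an epimorphism such that every monomorphism whose cokernel is isomorphic to an
object of `𝓐` has the left lifting property with respect to `g`, then
`Ext¹_C(A, ker g) = 0` for every `A ∈ 𝓐`.  (2) Dually, if `𝓑` is a class of objects
and `f` is a monomorphism which has the left lifting property with respect to every
epimorphism whose kernel is isomorphic to an object of `𝓑`, then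
`Ext¹_C(coker f, B) = 0` for every `B ∈ 𝓑`. -/
theorem stmt_6 :
    (∀ (𝓐 : Set C) (X Y : C) (g : X ⟶ Y), Epi g →
      (∀ (Z W : C) (f : Z ⟶ W), Mono f →
        (∃ A ∈ 𝓐, Nonempty (cokernel f ≅ A)) → LLP f g) →
      ∀ A ∈ 𝓐, Ext1Zero A (kernel g)) ∧
    (∀ (𝓑 : Set C) (Z W : C) (f : Z ⟶ W), Mono f →
      (∀ (X Y : C) (g : X ⟶ Y), Epi g →
        (∃ B ∈ 𝓑, Nonempty (kernel g ≅ B)) → LLP f g) →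
      ∀ B ∈ 𝓑, Ext1Zero (cokernel f) B) := by
  constructor
  · intro 𝓐 X Y g _ hLLP A hA
    refine ext1Zero_of_forall_retraction fun E i p _ hS ↦ ?_
    have := hS.mono_f
    exact exists_retraction_of_llp_kernel g i (hLLP _ _ i this
      ⟨A, hA, ⟨IsColimit.coconePointUniqueUpToIso (cokernelIsCokernel i) hS.gIsCokernel⟩⟩)
  · intro 𝓑 Z W f _ hLLP B hB E i p _ hS
    have := hS.epi_g
    exact exists_section_of_llp_cokernel f p (hLLP _ _ p this
      ⟨B, hB, ⟨IsLimit.conePointUniqueUpToIso (kernelIsKernel p) hS.fIsKernel⟩⟩)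
end
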